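/- arXiv:2507.13836 — 4 statements merged into one kernel-verified Lean document; each statement's English description precedes it below -/
import Mathlib

section
/- Consistency of the adjoint transport with the dual connection (trivialized version): let E be a Banach space, V : Y → GL(E) differentiable with V(y₀) = Id, ℓ : Y → E* and e : Y → E differentiable. Define the dual transport V*(ŷ) := adjoint of V(ŷ), and Q*_{ℓ(y₀)}(ℓ'(y₀)δy) := d/dŷ [ℓ(ŷ) ∘ V(ŷ)]|_{ŷ=y₀} δy, and Q_{e(y₀)}(e'(y₀)δy) := d/dŷ[V(ŷ)⁻¹ e(ŷ)]|_{ŷ=y₀} δy. Then the product rule holds: d/dy[ℓ(y)(e(y))]|_{y₀}δy = (Q*_{ℓ(y₀)}ℓ'(y₀)δy)(e(y₀)) + ℓ(y₀)(Q_{e(y₀)}e'(y₀)δy). -/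
/-- Consistency of the adjoint transport with the dual connection (trivialized):
with `Q*_{ℓ(y₀)}ℓ'(y₀)δy = d/dŷ[ℓ(ŷ) ∘ V(ŷ)]|_{y₀}δy` and
`Q_{e(y₀)}e'(y₀)δy = d/dŷ[V(ŷ)⁻¹ e(ŷ)]|_{y₀}δy`, the product rule holds. -/
theorem adjoint_transport_dual_connection_product_rule
    {Y E : Type*} [NormedAddCommGroup Y] [NormedSpace ℝ Y] [CompleteSpace Y]
    [NormedAddCommGroup E] [NormedSpace ℝ E] [CompleteSpace E]
    (V W : Y → E →L[ℝ] E) (y₀ : Y)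
    (ℓ : Y → E →L[ℝ] ℝ) (e : Y → E)
    (hV : DifferentiableAt ℝ V y₀) (hW : DifferentiableAt ℝ W y₀)
    (hℓ : DifferentiableAt ℝ ℓ y₀) (he : DifferentiableAt ℝ e y₀)
    (hVid : V y₀ = ContinuousLinearMap.id ℝ E)
    (hinv₁ : ∀ y, (W y).comp (V y) = ContinuousLinearMap.id ℝ E)
    (hinv₂ : ∀ y, (V y).comp (W y) = ContinuousLinearMap.id ℝ E) :
    ∀ δy : Y,
      fderiv ℝ (fun z => ℓ z (e z)) y₀ δy =
        (fderiv ℝ (fun z => (ℓ z).comp (V z)) y₀ δy) (e y₀)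
          + (ℓ y₀) (fderiv ℝ (fun z => W z (e z)) y₀ δy) := by
  intro δy
  have hWid : W y₀ = ContinuousLinearMap.id ℝ E := by
    have := hinv₁ y₀; rwa [hVid, ContinuousLinearMap.comp_id] at this
  have hc : DifferentiableAt ℝ (fun z => (ℓ z).comp (V z)) y₀ := hℓ.clm_comp hV
  have hu : DifferentiableAt ℝ (fun z => W z (e z)) y₀ := hW.clm_apply he
  have key : (fun z => ℓ z (e z)) = fun z => ((ℓ z).comp (V z)) (W z (e z)) := by
    funext z
    have := ContinuousLinearMap.ext_iff.mp (hinv₂ z) (e z)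
    simp only [ContinuousLinearMap.comp_apply, ContinuousLinearMap.coe_comp',
      Function.comp_apply, ContinuousLinearMap.id_apply] at this ⊢
    rw [this]
  rw [key, fderiv_clm_apply hc hu]
  simp [hVid, hWid, ContinuousLinearMap.comp_id, add_comm]
end

section
/- Let H be a Hilbert space and y ↦ P(y) ∈ L(H,H) a differentiable family of orthogonal projections onto closed subspaces E_y = ran P(y). For ℓ_H : Y → H* differentiable and ℓ(y) := ℓ_H(y)|_{E_y}, the quantity Q*ℓ(y₀)δy := (ℓ_H'(y₀)δy + ℓ_H(y₀) ∘ P'(y₀)δy)|_{E_{y₀}} is independent of the extension: if ℓ̃_H is another differentiable extension with ℓ̃_H(y)|_{E_y} = ℓ_H(y)|_{E_y} for all y near y₀, then (ℓ̃_H'(y₀)δy + ℓ̃_H(y₀)∘P'(y₀)δy)(e) = (ℓ_H'(y₀)δy + ℓ_H(y₀)∘P'(y₀)δy)(e) for all e ∈ E_{y₀}. -/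
open Topology Filter

/-- Extension-independence of the embedded dual covariant derivative: if two
differentiable extensions `ℓ_H`, `ℓ̃_H` agree on the fibres `E_y = ran P(y)` near `y₀`,
then `(ℓ'(y₀)δy + ℓ(y₀)∘P'(y₀)δy)(e)` agrees for all `e ∈ E_{y₀}`. -/
theorem embedded_dual_connection_extension_independent
    {H Y : Type*} [NormedAddCommGroup H] [InnerProductSpace ℝ H] [CompleteSpace H]
    [NormedAddCommGroup Y] [NormedSpace ℝ Y] [CompleteSpace Y]
    (P : Y → H →L[ℝ] H) (y₀ : Y) (P' : Y →L[ℝ] (H →L[ℝ] H))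
    (hP : HasFDerivAt P P' y₀)
    (hidem : ∀ y, (P y).comp (P y) = P y)
    (hadj : ∀ y, ContinuousLinearMap.adjoint (P y) = P y)
    (ℓH ℓtH : Y → H →L[ℝ] ℝ) (ℓ' ℓt' : Y →L[ℝ] (H →L[ℝ] ℝ))
    (hℓ : HasFDerivAt ℓH ℓ' y₀) (hℓt : HasFDerivAt ℓtH ℓt' y₀)
    (hagree : ∀ᶠ y in 𝓝 y₀, ∀ v : H, ℓH y (P y v) = ℓtH y (P y v)) :
    ∀ (δy : Y) (e : H), P y₀ e = e →
      (ℓt' δy) e + (ℓtH y₀) (P' δy e) = (ℓ' δy) e + (ℓH y₀) (P' δy e) := by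
  intro δy e he
  have hPe : HasFDerivAt (fun y => P y e) (P'.flip e) y₀ := by
    simpa using hP.clm_apply (hasFDerivAt_const e y₀)
  have h1 : HasFDerivAt (fun y => ℓH y (P y e))
      ((ℓH y₀).comp (P'.flip e) + ℓ'.flip (P y₀ e)) y₀ := hℓ.clm_apply hPe
  have h2 : HasFDerivAt (fun y => ℓtH y (P y e))
      ((ℓtH y₀).comp (P'.flip e) + ℓt'.flip (P y₀ e)) y₀ := hℓt.clm_apply hPe
  have heq : (fun y => ℓtH y (P y e)) =ᶠ[𝓝 y₀] fun y => ℓH y (P y e) :=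
    hagree.mono fun y hy => (hy e).symm
  have hder := (h1.congr_of_eventuallyEq heq).unique h2
  have := congrArg (fun L => L δy) hder
  simp [he] at this
  linarith
end

section
/- Multiplier replaces projection derivative: let H be a Hilbert space, y ↦ A(y) ∈ L(H, R_H) differentiable with each A(y) surjective, E_y = ker A(y), P(y) the orthogonal projection onto E_y (assumed differentiable in y), ℓ_H : Y → H* differentiable, and λ(y) ∈ R_H* the unique multiplier with (ℓ_H(y) + λ(y)∘A(y))(Id − P(y))v = 0 for all v ∈ H and λ(y) differentiable. Then for every e ∈ ker A(y): λ(y)(A'(y)(δy, e)) = ℓ_H(y)((P'(y)δy) e). -/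
open Topology Filter

/-- Multiplier replaces projection derivative: from the identity
`0 = ℓ_H(y)(Id − P(y))v + λ(y)(A(y)v)` near `y₀`, differentiating and testing with
`e ∈ ker A(y₀)` yields `λ(y₀)(A'(y₀)δy e) = ℓ_H(y₀)((P'(y₀)δy) e)`. -/
theorem multiplier_replaces_projection_derivative
    {H Y R : Type*} [NormedAddCommGroup H] [InnerProductSpace ℝ H] [CompleteSpace H]
    [NormedAddCommGroup Y] [NormedSpace ℝ Y] [CompleteSpace Y]
    [NormedAddCommGroup R] [NormedSpace ℝ R] [CompleteSpace R]
    (A : Y → H →L[ℝ] R) (P : Y → H →L[ℝ] H) (ℓH : Y → H →L[ℝ] ℝ)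
    (lam : Y → R →L[ℝ] ℝ) (y₀ : Y)
    (A' : Y →L[ℝ] (H →L[ℝ] R)) (P' : Y →L[ℝ] (H →L[ℝ] H))
    (ℓ' : Y →L[ℝ] (H →L[ℝ] ℝ)) (lam' : Y →L[ℝ] (R →L[ℝ] ℝ))
    (hA : HasFDerivAt A A' y₀) (hP : HasFDerivAt P P' y₀)
    (hℓ : HasFDerivAt ℓH ℓ' y₀) (hlam : HasFDerivAt lam lam' y₀)
    (hsurj : ∀ y, Function.Surjective (A y))
    (hidem : ∀ y, (P y).comp (P y) = P y)
    (hadj : ∀ y, ContinuousLinearMap.adjoint (P y) = P y)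
    (hAP : ∀ y, (A y).comp (P y) = 0)
    (hfix : ∀ e : H, A y₀ e = 0 → P y₀ e = e)
    (hid : ∀ᶠ y in 𝓝 y₀, ∀ v : H, ℓH y (v - P y v) + lam y (A y v) = 0) :
    ∀ (δy : Y) (e : H), A y₀ e = 0 →
      lam y₀ ((A' δy) e) = ℓH y₀ ((P' δy) e) := by
  intro δy e he
  -- g y = ℓH y (e - P y e) + lam y (A y e) is eventually 0 near y₀
  have hPe : HasFDerivAt (fun y => (P y) e) (P'.flip e) y₀ := by
    have := hP.clm_apply (hasFDerivAt_const e y₀)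
    simpa using this
  have hu : HasFDerivAt (fun y => e - (P y) e) (-(P'.flip e)) y₀ := by
    simpa [Pi.sub_def] using (hasFDerivAt_const e y₀).sub hPe
  have hAe : HasFDerivAt (fun y => (A y) e) (A'.flip e) y₀ := by
    have := hA.clm_apply (hasFDerivAt_const e y₀)
    simpa using this
  have h1 : HasFDerivAt (fun y => ℓH y (e - P y e))
      ((ℓH y₀).comp (-(P'.flip e)) + ℓ'.flip (e - P y₀ e)) y₀ := hℓ.clm_apply hu
  have h2 : HasFDerivAt (fun y => lam y (A y e))
      ((lam y₀).comp (A'.flip e) + lam'.flip (A y₀ e)) y₀ := hlam.clm_apply hAe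
  have hg : HasFDerivAt (fun y => ℓH y (e - P y e) + lam y (A y e))
      (((ℓH y₀).comp (-(P'.flip e)) + ℓ'.flip (e - P y₀ e)) +
        ((lam y₀).comp (A'.flip e) + lam'.flip (A y₀ e))) y₀ := h1.add h2
  have h0 : HasFDerivAt (fun y => ℓH y (e - P y e) + lam y (A y e)) (0 : Y →L[ℝ] ℝ) y₀ := by
    have hc : HasFDerivAt (fun _ : Y => (0 : ℝ)) (0 : Y →L[ℝ] ℝ) y₀ := hasFDerivAt_const 0 y₀
    exact hc.congr_of_eventuallyEq (hid.mono fun y hy => hy e)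
  have hD := hg.unique h0
  have := congrArg (fun (T : Y →L[ℝ] ℝ) => T δy) hD
  simp only [ContinuousLinearMap.add_apply, ContinuousLinearMap.comp_apply,
    ContinuousLinearMap.neg_apply, ContinuousLinearMap.flip_apply,
    ContinuousLinearMap.zero_apply, hfix e he, he, sub_self, map_zero, map_neg] at this
  linarith
end

section
/- Constrained second-order identity (finite-dimensional version): let f : ℝⁿ → ℝ and c : ℝⁿ → ℝᵐ be twice continuously differentiable, x with c(x)=0 and c'(x) surjective, P(ξ) the orthogonal projection onto ker c'(ξ) (differentiable near x), and λ(x) ∈ (ℝᵐ)* the Lagrange multiplier satisfying (f'(x) + λ(x)c'(x))w = 0 for all w ∈ (ker c'(x))^⊥. Assume moreover f'(x) + λ(x)c'(x) = 0 on ℝⁿ (stationarity). Then for all δx, e ∈ ker c'(x): f''(x)(δx, e) + f'(x)((P'(x)δx)e) = f''(x)(δx, e) + λ(x)(c''(x)(δx, e)), i.e., the projection-based covariant Hessian coincides with the Hessian of the Lagrangian restricted to ker c'(x). -/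
/-- Constrained second-order identity: at a stationary point `x` of `f` on `{c = 0}`
with multiplier `λ` (so `f'(x) + λ∘c'(x) = 0`), for `δx, e ∈ ker c'(x)` the
projection-based covariant Hessian coincides with the Hessian of the Lagrangian:
`f''(x)(δx,e) + f'(x)((P'(x)δx)e) = f''(x)(δx,e) + λ(c''(x)(δx,e))`. -/
theorem constrained_second_order_identity {n m : ℕ}
    (f : EuclideanSpace ℝ (Fin n) → ℝ)
    (c : EuclideanSpace ℝ (Fin n) → EuclideanSpace ℝ (Fin m))
    (hf : ContDiff ℝ 2 f) (hc : ContDiff ℝ 2 c)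
    (x : EuclideanSpace ℝ (Fin n))
    (hcx : c x = 0) (hsurj : Function.Surjective (fderiv ℝ c x))
    (P : EuclideanSpace ℝ (Fin n) →
      EuclideanSpace ℝ (Fin n) →L[ℝ] EuclideanSpace ℝ (Fin n))
    (hPd : DifferentiableAt ℝ P x)
    (hidem : ∀ ξ, (P ξ).comp (P ξ) = P ξ)
    (hadj : ∀ ξ, ContinuousLinearMap.adjoint (P ξ) = P ξ)
    (hranP : ∀ᶠ ξ in nhds x, ∀ v, fderiv ℝ c ξ (P ξ v) = 0)
    (hfix : ∀ v, fderiv ℝ c x v = 0 → P x v = v)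
    (lam : EuclideanSpace ℝ (Fin m) →L[ℝ] ℝ)
    (hstat : ∀ v, fderiv ℝ f x v + lam (fderiv ℝ c x v) = 0) :
    ∀ δx e, fderiv ℝ c x δx = 0 → fderiv ℝ c x e = 0 →
      fderiv ℝ (fderiv ℝ f) x δx e + fderiv ℝ f x ((fderiv ℝ P x δx) e) =
        fderiv ℝ (fderiv ℝ f) x δx e + lam ((fderiv ℝ (fderiv ℝ c) x δx) e) := by
  intro δx e hδx he
  -- fderiv c is differentiable at x
  have hcd : DifferentiableAt ℝ (fderiv ℝ c) x := by
    have : ContDiff ℝ 1 (fderiv ℝ c) := hc.fderiv_right (by norm_num)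
    exact this.differentiable one_ne_zero x
  -- y ↦ P y e is differentiable at x
  have hPe : DifferentiableAt ℝ (fun y => P y e) x := by
    exact (ContinuousLinearMap.apply ℝ _ e).differentiableAt.comp x hPd
  have hfPe : fderiv ℝ (fun y => P y e) x = (fderiv ℝ P x).flip e := by
    ext v
    rw [fderiv_clm_apply hPd (differentiableAt_const e)]
    simp
  -- g y = fderiv c y (P y e) vanishes near x
  have hg0 : (fun y => fderiv ℝ c y (P y e)) =ᶠ[nhds x] (fun _ => (0 : EuclideanSpace ℝ (Fin m))) := by
    filter_upwards [hranP] with ξ hξ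
    exact hξ e
  have hgderiv : fderiv ℝ (fun y => fderiv ℝ c y (P y e)) x = 0 := by
    rw [hg0.fderiv_eq]
    exact fderiv_const_apply 0
  have hkey : fderiv ℝ (fun y => fderiv ℝ c y (P y e)) x δx
      = fderiv ℝ c x ((fderiv ℝ P x δx) e) + (fderiv ℝ (fderiv ℝ c) x δx) e := by
    rw [fderiv_clm_apply hcd hPe]
    simp [hfPe, hfix e he]
  have hzero : fderiv ℝ c x ((fderiv ℝ P x δx) e) + (fderiv ℝ (fderiv ℝ c) x δx) e = 0 := by
    rw [← hkey, hgderiv]; rfl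
  have hcc : fderiv ℝ c x ((fderiv ℝ P x δx) e) = -((fderiv ℝ (fderiv ℝ c) x δx) e) := by
    linear_combination (norm := abel) hzero
  have := hstat ((fderiv ℝ P x δx) e)
  rw [hcc] at this
  simp only [map_neg] at this
  linarith
end
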